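/- Squared kernel-distance invariance principle: Let d ≥ 2, let v : [−1,1] → ℝ be a nonnegative integrable function, and define D(x,y) = K_{C,v}(x,x) − 2 K_{C,v}(x,y) + K_{C,v}(y,y) for x, y ∈ S^d. Then for any N points x_0, …, x_{N-1} ∈ S^d, (1/N²) ∑_{k,ℓ=0}^{N-1} D(x_k, x_ℓ) + 2 ∫_{−1}^{1} v(t) ∫_{S^d} |σ_d(C(x;t)) − (1/N) ∑_{k=0}^{N-1} 1_{C(x;t)}(x_k)|² dσ_d(x) dt = ∫_{S^d} ∫_{S^d} D(x,y) dσ_d(x) dσ_d(y). -/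

import Mathlib

open MeasureTheory
open scoped RealInnerProductSpace

noncomputable section

/-- The unit sphere `S^d` in `ℝ^{d+1}`. -/
def sphereSet (d : ℕ) : Set (EuclideanSpace ℝ (Fin (d + 1))) :=
  Metric.sphere 0 1

/-- The normalized surface (uniform) measure `σ_d` on `S^d`. -/
def uSph (d : ℕ) : Measure (EuclideanSpace ℝ (Fin (d + 1))) :=
  (μH[(d : ℝ)] (sphereSet d))⁻¹ • (μH[(d : ℝ)]).restrict (sphereSet d)

/-- The spherical cap `C(z;t) = {y ∈ S^d : ⟨z,y⟩ ≥ t}`. -/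
def cap (d : ℕ) (z : EuclideanSpace ℝ (Fin (d + 1))) (t : ℝ) :
    Set (EuclideanSpace ℝ (Fin (d + 1))) :=
  {y | y ∈ sphereSet d ∧ t ≤ ⟪z, y⟫}

/-- Indicator function `1_{C(z;t)}`. -/
def capInd (d : ℕ) (z : EuclideanSpace ℝ (Fin (d + 1))) (t : ℝ)
    (x : EuclideanSpace ℝ (Fin (d + 1))) : ℝ :=
  (cap d z t).indicator (fun _ => (1 : ℝ)) x

/-- The constant `C_d = (1/d) Γ((d+1)/2)/(√π Γ(d/2))`. -/
def Cd (d : ℕ) : ℝ :=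
  (1 / (d : ℝ)) * Real.Gamma (((d : ℝ) + 1) / 2) /
    (Real.sqrt Real.pi * Real.Gamma ((d : ℝ) / 2))

end


/-- The weighted kernel `K_{C,v}(x,y) = ∫_{-1}^1 v(t) ∫_{S^d} 1_{C(z;t)}(x) 1_{C(z;t)}(y) dσ_d(z) dt`. -/
noncomputable def Kv (d : ℕ) (v : ℝ → ℝ) (x y : EuclideanSpace ℝ (Fin (d + 1))) : ℝ :=
  ∫ t in (-1 : ℝ)..1, v t * ∫ z, capInd d z t x * capInd d z t y ∂(uSph d)

/-!
Reflections of `ℝ^{d+1}` preserve `σ_d` and permute the caps of a fixed height, so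
`σ_d(C(z;t))` is a function `capArea t` of `t` alone for `z ∈ S^d`; by the symmetry
`1_{C(z;t)}(a) = 1_{C(a;t)}(z)` it is also the `σ_d`-average of `z ↦ 1_{C(z;t)}(a)`.
Hence `K(a,a) = κ := ∫ v·capArea` and, by Fubini, `∫ K(a,b) dσ_d(b) = κ₂ := ∫ v·capArea²`,
so `D(a,b) = 2κ - 2K(a,b)` on the sphere and `∫∫ D = 2κ - 2κ₂`. Expanding the square in the
discrepancy term gives `N⁻² ∑ K(x_k,x_l) - κ₂`, and the two sides agree.
-/

open Set

local notation "ℝ^" n => EuclideanSpace ℝ (Fin n)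

variable {d : ℕ}

lemma measurableSet_sphereSet (d : ℕ) : MeasurableSet (sphereSet d) :=
  Metric.isClosed_sphere.measurableSet

lemma uSph_apply (d : ℕ) (s : Set (ℝ^(d + 1))) :
    uSph d s = (μH[(d : ℝ)] (sphereSet d))⁻¹ * μH[(d : ℝ)] (s ∩ sphereSet d) := by
  rw [uSph, Measure.smul_apply, Measure.restrict_apply' (measurableSet_sphereSet d), smul_eq_mul]

-- Without computing `μH[d] (S^d)`: if it is `0` or `∞`, the normalisation makes `uSph d = 0`.
instance (d : ℕ) : IsZeroOrProbabilityMeasure (uSph d) := by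
  refine ⟨?_⟩
  rw [uSph_apply, univ_inter]
  by_cases h : μH[(d : ℝ)] (sphereSet d) = 0 ∨ μH[(d : ℝ)] (sphereSet d) = ⊤
  · left; rcases h with h | h <;> simp [h]
  · right; push Not at h; exact ENNReal.inv_mul_cancel h.1 h.2

lemma ae_mem_sphereSet (d : ℕ) : ∀ᵐ z ∂uSph d, z ∈ sphereSet d := by
  rw [ae_iff]
  change uSph d (sphereSet d)ᶜ = 0
  rw [uSph_apply, compl_inter_self, measure_empty, mul_zero]

lemma uSph_image_linearIsometryEquiv (f : (ℝ^(d + 1)) ≃ₗᵢ[ℝ] ℝ^(d + 1)) (s : Set (ℝ^(d + 1))) :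
    uSph d (f '' s) = uSph d s := by
  have hS : f ⁻¹' sphereSet d = sphereSet d := by ext; simp [sphereSet]
  rw [uSph_apply, uSph_apply, ← image_inter_preimage, hS,
    f.isometry.hausdorffMeasure_image (Or.inl d.cast_nonneg)]

lemma image_cap (f : (ℝ^(d + 1)) ≃ₗᵢ[ℝ] ℝ^(d + 1)) (z : ℝ^(d + 1)) (t : ℝ) :
    f '' cap d z t = cap d (f z) t := by
  ext y
  rw [f.image_eq_preimage_symm]
  simp [cap, sphereSet, ← f.symm.inner_map_map (f z)]

lemma uSph_cap_eq_of_mem {z w : ℝ^(d + 1)} (hz : z ∈ sphereSet d) (hw : w ∈ sphereSet d)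
    (t : ℝ) : uSph d (cap d z t) = uSph d (cap d w t) := by
  have hzw : ‖z‖ = ‖w‖ := by simp_all [sphereSet]
  let f := Submodule.reflection (ℝ ∙ (z - w))ᗮ
  rw [← Submodule.reflection_sub hzw, ← image_cap f, uSph_image_linearIsometryEquiv]

noncomputable def northPole (d : ℕ) : ℝ^(d + 1) := EuclideanSpace.single 0 1

lemma northPole_mem_sphereSet (d : ℕ) : northPole d ∈ sphereSet d := by
  simp [northPole, sphereSet]

noncomputable def capArea (d : ℕ) (t : ℝ) : ℝ := (uSph d (cap d (northPole d) t)).toReal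

lemma uSph_cap_toReal {z : ℝ^(d + 1)} (hz : z ∈ sphereSet d) (t : ℝ) :
    (uSph d (cap d z t)).toReal = capArea d t := by
  rw [capArea, uSph_cap_eq_of_mem hz (northPole_mem_sphereSet d)]

lemma antitone_capArea (d : ℕ) : Antitone (capArea d) := fun _ _ hst =>
  ENNReal.toReal_mono (measure_ne_top _ _) (measure_mono fun _ hy => ⟨hy.1, hst.trans hy.2⟩)

lemma capArea_nonneg (d : ℕ) (t : ℝ) : 0 ≤ capArea d t := ENNReal.toReal_nonneg

lemma capArea_le_one (d : ℕ) (t : ℝ) : capArea d t ≤ 1 := measureReal_le_one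

lemma measurableSet_cap (z : ℝ^(d + 1)) (t : ℝ) : MeasurableSet (cap d z t) := by
  have hclosed : IsClosed (sphereSet d ∩ {y | t ≤ ⟪z, y⟫}) :=
    Metric.isClosed_sphere.inter (isClosed_le continuous_const (by fun_prop))
  exact hclosed.measurableSet

@[fun_prop]
lemma Measurable.capInd {α : Type*} [MeasurableSpace α] {Z A : α → ℝ^(d + 1)} {T : α → ℝ}
    (hZ : Measurable Z) (hT : Measurable T) (hA : Measurable A) :
    Measurable fun p => capInd d (Z p) (T p) (A p) := by
  have hmeas : MeasurableSet ({p | A p ∈ sphereSet d} ∩ {p | T p ≤ ⟪Z p, A p⟫}) :=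
    (hA (measurableSet_sphereSet d)).inter (measurableSet_le hT (hZ.inner hA))
  exact measurable_const.indicator hmeas

lemma norm_capInd_le_one (z : ℝ^(d + 1)) (t : ℝ) (a : ℝ^(d + 1)) : ‖capInd d z t a‖ ≤ 1 :=
  (norm_indicator_le_norm_self (fun _ => (1 : ℝ)) a).trans norm_one.le

lemma capInd_mul_self (z : ℝ^(d + 1)) (t : ℝ) (a : ℝ^(d + 1)) :
    capInd d z t a * capInd d z t a = capInd d z t a := by
  by_cases h : a ∈ cap d z t <;> simp [capInd, h]

lemma capInd_comm {z a : ℝ^(d + 1)} (hz : z ∈ sphereSet d) (ha : a ∈ sphereSet d) (t : ℝ) :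
    capInd d z t a = capInd d a t z := by
  simp [capInd, cap, indicator, hz, ha, real_inner_comm]

lemma integral_capInd (z : ℝ^(d + 1)) (t : ℝ) :
    ∫ b, capInd d z t b ∂uSph d = (uSph d (cap d z t)).toReal := by
  rw [← measureReal_def, ← integral_indicator_one (measurableSet_cap z t)]
  rfl

lemma integral_capInd_center {a : ℝ^(d + 1)} (ha : a ∈ sphereSet d) (t : ℝ) :
    ∫ z, capInd d z t a ∂uSph d = capArea d t := by
  rw [integral_congr_ae ((ae_mem_sphereSet d).mono fun z hz => capInd_comm hz ha t),
    integral_capInd, uSph_cap_toReal ha]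

lemma integrable_capInd_center (t : ℝ) (a : ℝ^(d + 1)) :
    Integrable (fun z => capInd d z t a) (uSph d) :=
  .of_bound (by fun_prop : Measurable fun z => capInd d z t a).aestronglyMeasurable 1
    (ae_of_all _ fun z => norm_capInd_le_one z t a)

noncomputable def capKernel (d : ℕ) (t : ℝ) (a b : ℝ^(d + 1)) : ℝ :=
  ∫ z, capInd d z t a * capInd d z t b ∂uSph d

@[fun_prop]
lemma Measurable.capKernel {α : Type*} [MeasurableSpace α] {T : α → ℝ} {A B : α → ℝ^(d + 1)}
    (hT : Measurable T) (hA : Measurable A) (hB : Measurable B) :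
    Measurable fun p => capKernel d (T p) (A p) (B p) := by
  have h : Measurable fun q : α × ℝ^(d + 1) =>
      _root_.capInd d q.2 (T q.1) (A q.1) * _root_.capInd d q.2 (T q.1) (B q.1) := by
    fun_prop
  exact h.stronglyMeasurable.integral_prod_right'.measurable

lemma norm_capKernel_le_one (t : ℝ) (a b : ℝ^(d + 1)) : ‖capKernel d t a b‖ ≤ 1 := by
  refine (norm_integral_le_of_norm_le_const (C := 1) (ae_of_all _ fun z => ?_)).trans ?_
  · rw [norm_mul]
    exact mul_le_one₀ (norm_capInd_le_one z t a) (norm_nonneg _) (norm_capInd_le_one z t b)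
  · simp

lemma capKernel_self {a : ℝ^(d + 1)} (ha : a ∈ sphereSet d) (t : ℝ) :
    capKernel d t a a = capArea d t := by
  simp_rw [capKernel, capInd_mul_self]
  exact integral_capInd_center ha t

lemma integral_capKernel {a : ℝ^(d + 1)} (ha : a ∈ sphereSet d) (t : ℝ) :
    ∫ b, capKernel d t a b ∂uSph d = capArea d t ^ 2 := by
  have hint : Integrable (Function.uncurry fun b z => capInd d z t a * capInd d z t b)
      ((uSph d).prod (uSph d)) := by
    refine .of_bound (Measurable.aestronglyMeasurable ?_) 1 (ae_of_all _ fun p => ?_)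
    · fun_prop
    · rw [Function.uncurry_apply_pair, norm_mul]
      exact mul_le_one₀ (norm_capInd_le_one _ t a) (norm_nonneg _) (norm_capInd_le_one _ t _)
  calc ∫ b, capKernel d t a b ∂uSph d
      = ∫ z, capInd d z t a * ∫ b, capInd d z t b ∂uSph d ∂uSph d := by
        simp_rw [← integral_const_mul]
        exact integral_integral_swap hint
    _ = ∫ z, capInd d z t a * capArea d t ∂uSph d :=
        integral_congr_ae ((ae_mem_sphereSet d).mono fun z hz => by
          dsimp only
          rw [integral_capInd, uSph_cap_toReal hz])
    _ = capArea d t ^ 2 := by rw [integral_mul_const, integral_capInd_center ha, sq]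

lemma integral_sq_sub_average_capInd [IsProbabilityMeasure (uSph d)] {N : ℕ} (hN : N ≠ 0)
    {x : Fin N → ℝ^(d + 1)} (hx : ∀ k, x k ∈ sphereSet d) (t : ℝ) :
    ∫ z, |(uSph d (cap d z t)).toReal - (1 / (N : ℝ)) * ∑ k, capInd d z t (x k)| ^ 2 ∂uSph d
      = 1 / (N : ℝ) ^ 2 * ∑ k, ∑ l, capKernel d t (x k) (x l) - capArea d t ^ 2 := by
  have hprod (a b : ℝ^(d + 1)) : Integrable (fun z => capInd d z t a * capInd d z t b) (uSph d) :=
    (integrable_capInd_center t b).bdd_mul (integrable_capInd_center t a).aestronglyMeasurable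
      (ae_of_all _ fun z => norm_capInd_le_one z t a)
  have hsum : Integrable (fun z => ∑ k, capInd d z t (x k)) (uSph d) :=
    integrable_finsetSum _ fun k _ => integrable_capInd_center t (x k)
  have hprodSum (k : Fin N) :
      Integrable (fun z => ∑ l, capInd d z t (x k) * capInd d z t (x l)) (uSph d) :=
    integrable_finsetSum _ fun l _ => hprod (x k) (x l)
  have hexpand : ∀ᵐ z ∂uSph d,
      |(uSph d (cap d z t)).toReal - (1 / (N : ℝ)) * ∑ k, capInd d z t (x k)| ^ 2
        = capArea d t ^ 2 - 2 * capArea d t / N * ∑ k, capInd d z t (x k)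
          + 1 / (N : ℝ) ^ 2 * ∑ k, ∑ l, capInd d z t (x k) * capInd d z t (x l) :=
    (ae_mem_sphereSet d).mono fun z hz => by
      rw [sq_abs, uSph_cap_toReal hz, ← Finset.sum_mul_sum]
      ring
  rw [integral_congr_ae hexpand, integral_add, integral_sub, integral_const, integral_const_mul,
    integral_const_mul, integral_finsetSum, integral_finsetSum]
  · simp_rw [integral_finsetSum _ fun l _ => hprod _ _, integral_capInd_center (hx _)]
    simp only [capKernel, probReal_univ, Finset.sum_const, Finset.card_univ, Fintype.card_fin]
    field_simp
    ring
  exacts [fun k _ => hprodSum k, fun k _ => integrable_capInd_center t (x k), integrable_const _,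
    hsum.const_mul _, (integrable_const _).sub (hsum.const_mul _),
    (integrable_finsetSum _ fun k _ => hprodSum k).const_mul _]

lemma IntervalIntegrable.mul_bdd {μ : Measure ℝ} {f g : ℝ → ℝ} {a b c : ℝ}
    (hf : IntervalIntegrable f μ a b) (hg : AEStronglyMeasurable g μ) (hg_bound : ∀ x, ‖g x‖ ≤ c) :
    IntervalIntegrable (fun x => f x * g x) μ a b :=
  ⟨hf.1.mul_bdd hg.restrict (ae_of_all _ hg_bound), hf.2.mul_bdd hg.restrict (ae_of_all _ hg_bound)⟩

variable {v : ℝ → ℝ}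

lemma Kv_self {a : ℝ^(d + 1)} (ha : a ∈ sphereSet d) :
    Kv d v a a = ∫ t in (-1 : ℝ)..1, v t * capArea d t :=
  intervalIntegral.integral_congr fun t _ => congrArg (v t * ·) (capKernel_self ha t)

lemma intervalIntegrable_mul_capKernel (hv : IntervalIntegrable v volume (-1) 1)
    (a b : ℝ^(d + 1)) :
    IntervalIntegrable (fun t => v t * capKernel d t a b) volume (-1) 1 :=
  hv.mul_bdd (by fun_prop : Measurable _).aestronglyMeasurable (norm_capKernel_le_one · a b)

lemma integrable_mul_capKernel_prod (hv : IntervalIntegrable v volume (-1) 1) (a : ℝ^(d + 1)) :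
    Integrable (Function.uncurry fun t b => v t * capKernel d t a b)
      ((volume.restrict (uIoc (-1) 1)).prod (uSph d)) :=
  (hv.def'.comp_fst (uSph d)).mul_bdd (by fun_prop : Measurable _).aestronglyMeasurable
    (ae_of_all _ fun p => norm_capKernel_le_one p.1 a p.2)

lemma integrable_Kv_right (hv : IntervalIntegrable v volume (-1) 1) (a : ℝ^(d + 1)) :
    Integrable (Kv d v a) (uSph d) := by
  refine (integrable_mul_capKernel_prod hv a).integral_prod_right.congr (ae_of_all _ fun b => ?_)
  simp [Kv, intervalIntegral.integral_of_le, capKernel]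

lemma integral_Kv_right (hv : IntervalIntegrable v volume (-1) 1) {a : ℝ^(d + 1)}
    (ha : a ∈ sphereSet d) :
    ∫ b, Kv d v a b ∂uSph d = ∫ t in (-1 : ℝ)..1, v t * capArea d t ^ 2 := by
  calc ∫ b, Kv d v a b ∂uSph d
      = ∫ t in (-1 : ℝ)..1, ∫ b, v t * capKernel d t a b ∂uSph d :=
        (intervalIntegral_integral_swap (integrable_mul_capKernel_prod hv a)).symm
    _ = _ := by simp_rw [integral_const_mul, integral_capKernel ha]

lemma integral_mul_integral_sq_sub_average_capInd [IsProbabilityMeasure (uSph d)]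
    (hv : IntervalIntegrable v volume (-1) 1) {N : ℕ} (hN : N ≠ 0)
    {x : Fin N → ℝ^(d + 1)} (hx : ∀ k, x k ∈ sphereSet d) :
    ∫ t in (-1 : ℝ)..1, v t * ∫ z,
        |(uSph d (cap d z t)).toReal - (1 / (N : ℝ)) * ∑ k, capInd d z t (x k)| ^ 2 ∂uSph d
      = 1 / (N : ℝ) ^ 2 * ∑ k, ∑ l, Kv d v (x k) (x l)
        - ∫ t in (-1 : ℝ)..1, v t * capArea d t ^ 2 := by
  have hArea : IntervalIntegrable (fun t => v t * capArea d t ^ 2) volume (-1) 1 :=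
    hv.mul_bdd ((antitone_capArea d).measurable.pow_const 2).aestronglyMeasurable (c := 1)
      fun t => by
        rw [norm_pow, Real.norm_of_nonneg (capArea_nonneg d t)]
        exact pow_le_one₀ (capArea_nonneg d t) (capArea_le_one d t)
  have hpointwise (t : ℝ) :
      v t * ∫ z,
        |(uSph d (cap d z t)).toReal - (1 / (N : ℝ)) * ∑ k, capInd d z t (x k)| ^ 2 ∂uSph d
        = 1 / (N : ℝ) ^ 2 * ∑ k, ∑ l, v t * capKernel d t (x k) (x l) - v t * capArea d t ^ 2 := by
    rw [integral_sq_sub_average_capInd hN hx]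
    simp_rw [← Finset.mul_sum]
    ring
  have hsum (k : Fin N) :
      IntervalIntegrable (fun t => ∑ l, v t * capKernel d t (x k) (x l)) volume (-1) 1 := by
    simpa only [Finset.sum_fn] using
      IntervalIntegrable.sum _ fun l _ => intervalIntegrable_mul_capKernel hv (x k) (x l)
  have hdoubleSum : IntervalIntegrable (fun t => ∑ k, ∑ l, v t * capKernel d t (x k) (x l))
      volume (-1) 1 := by
    simpa only [Finset.sum_fn] using IntervalIntegrable.sum _ fun k _ => hsum k
  rw [intervalIntegral.integral_congr fun t _ => hpointwise t,
    intervalIntegral.integral_sub (hdoubleSum.const_mul _) hArea,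
    intervalIntegral.integral_const_mul, intervalIntegral.integral_finsetSum fun k _ => hsum k]
  simp_rw [intervalIntegral.integral_finsetSum fun l _ => intervalIntegrable_mul_capKernel hv _ _]
  rfl

theorem squared_kernel_distance_invariance_general (d N : ℕ) (hN : 0 < N)
    (v : ℝ → ℝ)
    (hvInt : IntervalIntegrable v MeasureTheory.volume (-1) 1)
    (D : EuclideanSpace ℝ (Fin (d + 1)) → EuclideanSpace ℝ (Fin (d + 1)) → ℝ)
    (hD : ∀ p q, D p q = Kv d v p p - 2 * Kv d v p q + Kv d v q q)
    (x : Fin N → EuclideanSpace ℝ (Fin (d + 1)))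
    (hx : ∀ k, x k ∈ sphereSet d) :
    (1 / (N : ℝ) ^ 2) * (∑ k, ∑ l, D (x k) (x l))
      + 2 * ∫ t in (-1 : ℝ)..1, v t * ∫ z,
          |((uSph d) (cap d z t)).toReal - (1 / (N : ℝ)) * ∑ k, capInd d z t (x k)| ^ 2
          ∂(uSph d)
    = ∫ a, ∫ b, D a b ∂(uSph d) ∂(uSph d) := by
  rcases eq_zero_or_isProbabilityMeasure (uSph d) with h0 | _
  · simp [hD, Kv, h0]
  rw [integral_mul_integral_sq_sub_average_capInd hvInt hN.ne' hx]
  set κ := ∫ t in (-1 : ℝ)..1, v t * capArea d t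
  set κ₂ := ∫ t in (-1 : ℝ)..1, v t * capArea d t ^ 2
  have hD_sphere {a b} (ha : a ∈ sphereSet d) (hb : b ∈ sphereSet d) :
      D a b = 2 * κ - 2 * Kv d v a b := by
    rw [hD, Kv_self ha, Kv_self hb]
    ring
  have hrow {a} (ha : a ∈ sphereSet d) : ∫ b, D a b ∂uSph d = 2 * κ - 2 * κ₂ := by
    rw [integral_congr_ae ((ae_mem_sphereSet d).mono fun b hb => hD_sphere ha hb),
      integral_sub (integrable_const _) ((integrable_Kv_right hvInt a).const_mul 2),
      integral_const, probReal_univ, one_smul, integral_const_mul, integral_Kv_right hvInt ha]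
  rw [integral_congr_ae ((ae_mem_sphereSet d).mono fun a ha => hrow ha), integral_const,
    probReal_univ, one_smul]
  simp_rw [hD_sphere (hx _) (hx _), Finset.sum_sub_distrib, ← Finset.mul_sum, Finset.sum_const,
    Finset.card_univ, Fintype.card_fin, nsmul_eq_mul]
  field_simp
  ring

/-- Squared kernel-distance invariance principle. -/
theorem squared_kernel_distance_invariance (d N : ℕ) (hd : 2 ≤ d) (hN : 0 < N)
    (v : ℝ → ℝ)
    (hv0 : ∀ t ∈ Set.Icc (-1 : ℝ) 1, 0 ≤ v t)
    (hvInt : IntervalIntegrable v MeasureTheory.volume (-1) 1)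
    (D : EuclideanSpace ℝ (Fin (d + 1)) → EuclideanSpace ℝ (Fin (d + 1)) → ℝ)
    (hD : ∀ p q, D p q = Kv d v p p - 2 * Kv d v p q + Kv d v q q)
    (x : Fin N → EuclideanSpace ℝ (Fin (d + 1)))
    (hx : ∀ k, x k ∈ sphereSet d) :
    (1 / (N : ℝ) ^ 2) * (∑ k, ∑ l, D (x k) (x l))
      + 2 * ∫ t in (-1 : ℝ)..1, v t * ∫ z,
          |((uSph d) (cap d z t)).toReal - (1 / (N : ℝ)) * ∑ k, capInd d z t (x k)| ^ 2
          ∂(uSph d)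
    = ∫ a, ∫ b, D a b ∂(uSph d) ∂(uSph d) :=
  squared_kernel_distance_invariance_general d N hN v hvInt D hD x hx
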